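/- arXiv:1811.05207 — 2 statements merged into one kernel-verified Lean document; each statement's English description precedes it below -/
import Mathlib

section
/- If φ = (φ_1,…,φ_N) and ψ = (ψ_1,…,ψ_N) are tuples of essentially bounded measurable functions (not necessarily normalized) with T_i(φ) = T_i(ψ) m_i-a.e. for every i = 1,…,N, then Σ_{i=1}^N φ_i(x_i) = Σ_{i=1}^N ψ_i(x_i) for m-a.e. x = (x_1,…,x_N) ∈ X. -/
open MeasureTheory Filter
open scoped ENNReal

noncomputable section

/-- The density kernel `γ_φ(x) = K(x) exp(∑_j φ_j(x_j))`. -/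
def gammaFn {N : ℕ} {X : Fin N → Type*} (K : (∀ i, X i) → ℝ) (φ : ∀ i, X i → ℝ)
    (x : ∀ i, X i) : ℝ :=
  K x * Real.exp (∑ j, φ j (x j))

/-- `T_i(φ)(x_i) = ∫_{X_{-i}} K(x_i, x_{-i}) exp(∑_j φ_j(x_j)) dm_{-i}(x_{-i})`.
Since every `m j` is a probability measure, integrating over the full product
(with the `i`-th coordinate replaced by `x_i` via `Function.update`) agrees with
integrating over `∏_{j ≠ i} X_j`. -/
def schrT {N : ℕ} {X : Fin N → Type*} [∀ i, MeasurableSpace (X i)]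
    (m : ∀ i, Measure (X i)) (K : (∀ i, X i) → ℝ) (φ : ∀ i, X i → ℝ)
    (i : Fin N) (xi : X i) : ℝ :=
  ∫ y, gammaFn K φ (Function.update y i xi) ∂Measure.pi m

/-- `L_{φ,i}(h)(x_i)`, the conditional-expectation type operator obtained by
linearizing the Schrödinger system. -/
def schrL {N : ℕ} {X : Fin N → Type*} [∀ i, MeasurableSpace (X i)]
    (m : ∀ i, Measure (X i)) (K : (∀ i, X i) → ℝ) (φ h : ∀ i, X i → ℝ)
    (i : Fin N) (xi : X i) : ℝ :=
  (∫ y, gammaFn K φ (Function.update y i xi) *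
      ∑ j ∈ Finset.univ.erase i, h j (Function.update y i xi j) ∂Measure.pi m) /
  (∫ y, gammaFn K φ (Function.update y i xi) ∂Measure.pi m)

/-- A tuple of essentially bounded measurable functions. -/
def BddTuple {N : ℕ} {X : Fin N → Type*} [∀ i, MeasurableSpace (X i)]
    (m : ∀ i, Measure (X i)) (φ : ∀ i, X i → ℝ) : Prop :=
  ∀ i, Measurable (φ i) ∧ MemLp (φ i) ⊤ (m i)

/-- Membership in `E`: essentially bounded measurable tuples with
`∫ φ_i dm_i = 0` for `i = 1, …, N-1` (i.e. all but the last index). -/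
def InE {N : ℕ} {X : Fin N → Type*} [∀ i, MeasurableSpace (X i)]
    (m : ∀ i, Measure (X i)) (φ : ∀ i, X i → ℝ) : Prop :=
  BddTuple m φ ∧ ∀ i : Fin N, (i : ℕ) < N - 1 → ∫ x, φ i x ∂m i = 0

/-- Membership in `F`: essentially bounded measurable tuples whose integrals all coincide. -/
def InF {N : ℕ} {X : Fin N → Type*} [∀ i, MeasurableSpace (X i)]
    (m : ∀ i, Measure (X i)) (μ : ∀ i, X i → ℝ) : Prop :=
  BddTuple m μ ∧ ∀ i j, ∫ x, μ i x ∂m i = ∫ x, μ j x ∂m j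

/-- Membership in `F_{++}`: members of `F` which are bounded away from `0`. -/
def InFpp {N : ℕ} {X : Fin N → Type*} [∀ i, MeasurableSpace (X i)]
    (m : ∀ i, Measure (X i)) (μ : ∀ i, X i → ℝ) : Prop :=
  InF m μ ∧ ∀ i, ∃ c : ℝ, 0 < c ∧ ∀ᵐ x ∂m i, c ≤ μ i x

/-- Membership in `F_{++,M}`: members of `F_{++}` with `1/M ≤ μ_i ≤ M` a.e. -/
def InFppM {N : ℕ} {X : Fin N → Type*} [∀ i, MeasurableSpace (X i)]
    (m : ∀ i, Measure (X i)) (M : ℝ) (μ : ∀ i, X i → ℝ) : Prop :=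
  InFpp m μ ∧ ∀ i, ∀ᵐ x ∂m i, 1 / M ≤ μ i x ∧ μ i x ≤ M

end

/-! Write `γ_φ = K e^{∑ φ_j}`, `u = ∑ φ_j`, `v = ∑ ψ_j`. Integrating out every coordinate but the
`i`-th turns `∫ γ_φ(x) h(x_i) dm` into `∫ T_i(φ) h dm_i`, so `T(φ) = T(ψ)` forces
`∫ (γ_φ - γ_ψ)(x) (φ_i - ψ_i)(x_i) dm = 0` for every `i`. Summing over `i` gives
`∫ K (e^u - e^v)(u - v) dm = 0`; the integrand is nonnegative because `exp` is increasing, and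
vanishes only where `u = v` because `K > 0`. -/

section PiUpdate

variable {ι : Type*} [Fintype ι] {X : ι → Type*} [∀ i, MeasurableSpace (X i)]
  (m : ∀ i, Measure (X i)) [∀ i, IsProbabilityMeasure (m i)]

theorem MeasureTheory.MemLp.comp_eval {E : Type*} [NormedAddCommGroup E] {p : ℝ≥0∞} {i : ι}
    {f : X i → E} (hf : MemLp f p (m i)) : MemLp (fun x => f (x i)) p (Measure.pi m) :=
  hf.comp_measurePreserving (measurePreserving_eval m i)

variable [DecidableEq ι]

theorem measurePreserving_update_prod (i : ι) :
    MeasurePreserving (fun p : (∀ j, X j) × X i => Function.update p.1 i p.2)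
      ((Measure.pi m).prod (m i)) (Measure.pi m) := by
  refine ⟨measurable_update', (Measure.pi_eq fun s hs => ?_).symm⟩
  have hbox : (fun p : (∀ j, X j) × X i => Function.update p.1 i p.2) ⁻¹' Set.univ.pi s =
      Set.univ.pi (Function.update s i Set.univ) ×ˢ s i := by
    ext ⟨y, t⟩
    simp only [Set.mem_preimage, Set.mem_univ_pi, Set.mem_prod]
    grind
  rw [Measure.map_apply measurable_update' (MeasurableSet.univ_pi hs), hbox,
    Measure.prod_prod, Measure.pi_pi]
  have hupd : (fun j => m j (Function.update s i Set.univ j)) =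
      Function.update (fun j => m j (s j)) i 1 := by
    rw [← measure_univ (μ := m i)]
    exact funext (Function.apply_update (fun j => m j) s i Set.univ)
  rw [hupd, Finset.prod_update_of_mem (Finset.mem_univ i), one_mul, mul_comm]
  exact (Finset.prod_eq_mul_prod_sdiff_singleton_of_mem (Finset.mem_univ i) fun j => m j (s j)).symm

theorem integral_pi_eq_integral_integral_update {E : Type*} [NormedAddCommGroup E]
    [NormedSpace ℝ E] (i : ι) {f : (∀ j, X j) → E} (hf : Integrable f (Measure.pi m)) :
    ∫ x, f x ∂Measure.pi m = ∫ t, ∫ y, f (Function.update y i t) ∂Measure.pi m ∂m i := by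
  have hmp := measurePreserving_update_prod m i
  rw [← hmp.map_eq] at hf
  conv_lhs => rw [← hmp.map_eq]
  rw [integral_map hmp.measurable.aemeasurable hf.aestronglyMeasurable]
  exact integral_prod_symm _ ((integrable_map_measure hf.aestronglyMeasurable
    hmp.measurable.aemeasurable).1 hf)

end PiUpdate

theorem MeasureTheory.MemLp.exp_top {α : Type*} [MeasurableSpace α] {μ : Measure α}
    {f : α → ℝ} (hf : MemLp f ⊤ μ) : MemLp (fun x => Real.exp (f x)) ⊤ μ := by
  obtain ⟨C, hC⟩ := eLpNormEssSup_lt_top_iff_isBoundedUnder.1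
    (eLpNorm_exponent_top (f := f) ▸ hf.eLpNorm_lt_top)
  refine memLp_top_of_bound (Real.continuous_exp.comp_aestronglyMeasurable hf.1) (Real.exp C) ?_
  filter_upwards [hC] with x hx
  rw [Real.norm_of_nonneg (Real.exp_pos _).le, Real.exp_le_exp]
  exact (le_abs_self _).trans hx

section Potentials

variable {N : ℕ} {X : Fin N → Type*} [∀ i, MeasurableSpace (X i)] {m : ∀ i, Measure (X i)}
  [∀ i, IsProbabilityMeasure (m i)] {K : (∀ i, X i) → ℝ} {φ ψ : ∀ i, X i → ℝ}

theorem BddTuple.memLp_sum (hφ : BddTuple m φ) :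
    MemLp (fun x => ∑ j, φ j (x j)) ⊤ (Measure.pi m) :=
  memLp_finsetSum Finset.univ fun j _ => (hφ j).2.comp_eval m

theorem BddTuple.memLp_gammaFn (hK : MemLp K ⊤ (Measure.pi m)) (hφ : BddTuple m φ) :
    MemLp (gammaFn K φ) ⊤ (Measure.pi m) :=
  hφ.memLp_sum.exp_top.mul hK

theorem BddTuple.integrable_gammaFn_mul (hK : MemLp K ⊤ (Measure.pi m)) (hφ : BddTuple m φ)
    {i : Fin N} {h : X i → ℝ} (hh : MemLp h ⊤ (m i)) :
    Integrable (fun x => gammaFn K φ x * h (x i)) (Measure.pi m) :=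
  ((hh.comp_eval m).mul (hφ.memLp_gammaFn hK)).integrable le_top

theorem integral_gammaFn_mul_eq_integral_schrT_mul {i : Fin N} {h : X i → ℝ}
    (hint : Integrable (fun x => gammaFn K φ x * h (x i)) (Measure.pi m)) :
    ∫ x, gammaFn K φ x * h (x i) ∂Measure.pi m = ∫ t, schrT m K φ i t * h t ∂m i := by
  rw [integral_pi_eq_integral_integral_update m i hint]
  simp only [Function.update_self, integral_mul_const]
  rfl

theorem integral_gammaFn_sub_mul_sum_eq_zero (hK : MemLp K ⊤ (Measure.pi m))
    (hφ : BddTuple m φ) (hψ : BddTuple m ψ) (hT : ∀ i, schrT m K φ i =ᵐ[m i] schrT m K ψ i)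
    {h : ∀ i, X i → ℝ} (hh : ∀ i, MemLp (h i) ⊤ (m i)) :
    ∫ x, (gammaFn K φ x - gammaFn K ψ x) * ∑ i, h i (x i) ∂Measure.pi m = 0 := by
  have hφh i := hφ.integrable_gammaFn_mul hK (hh i)
  have hψh i := hψ.integrable_gammaFn_mul hK (hh i)
  simp only [Finset.mul_sum, sub_mul, Finset.sum_sub_distrib]
  rw [integral_sub (integrable_finsetSum _ fun i _ => hφh i)
      (integrable_finsetSum _ fun i _ => hψh i),
    integral_finsetSum _ fun i _ => hφh i, integral_finsetSum _ fun i _ => hψh i, sub_eq_zero]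
  refine Finset.sum_congr rfl fun i _ => ?_
  rw [integral_gammaFn_mul_eq_integral_schrT_mul (hφh i),
    integral_gammaFn_mul_eq_integral_schrT_mul (hψh i)]
  exact integral_congr_ae ((hT i).mul EventuallyEq.rfl)

end Potentials

theorem mul_exp_sub_mul_exp_mul_sub_pos {k u v : ℝ} (hk : 0 < k) (huv : u ≠ v) :
    0 < (k * Real.exp u - k * Real.exp v) * (u - v) := by
  rw [← mul_sub, mul_assoc]
  refine mul_pos hk ?_
  rcases huv.lt_or_gt with h | h
  · exact mul_pos_of_neg_of_neg (sub_neg.2 (Real.exp_lt_exp.2 h)) (sub_neg.2 h)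
  · exact mul_pos (sub_pos.2 (Real.exp_lt_exp.2 h)) (sub_pos.2 h)

theorem sum_potentials_unique_general
    {N : ℕ} {X : Fin N → Type*} [∀ i, MeasurableSpace (X i)]
    (m : ∀ i, MeasureTheory.Measure (X i)) [∀ i, MeasureTheory.IsProbabilityMeasure (m i)]
    (K : (∀ i, X i) → ℝ) (a b : ℝ) (ha : 0 < a)
    (hK : Measurable K) (hKb : ∀ᵐ x ∂MeasureTheory.Measure.pi m, a ≤ K x ∧ K x ≤ b)
    (φ ψ : ∀ i, X i → ℝ) (hφ : BddTuple m φ) (hψ : BddTuple m ψ)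
    (h : ∀ i, schrT m K φ i =ᵐ[m i] schrT m K ψ i) :
    ∀ᵐ x ∂MeasureTheory.Measure.pi m, ∑ i, φ i (x i) = ∑ i, ψ i (x i) := by
  have hKpos : ∀ᵐ x ∂Measure.pi m, 0 < K x := hKb.mono fun x hx => ha.trans_le hx.1
  have hKLp : MemLp K ⊤ (Measure.pi m) := memLp_top_of_bound hK.aestronglyMeasurable b <| by
    filter_upwards [hKb, hKpos] with x hx hxpos
    exact (Real.norm_of_nonneg hxpos.le).trans_le hx.2
  set u := fun x : ∀ i, X i => ∑ i, φ i (x i)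
  set v := fun x : ∀ i, X i => ∑ i, ψ i (x i)
  set F := fun x => (gammaFn K φ x - gammaFn K ψ x) * (u x - v x)
  have hF_int : Integrable F (Measure.pi m) :=
    ((hφ.memLp_sum.sub hψ.memLp_sum).mul
      ((hφ.memLp_gammaFn hKLp).sub (hψ.memLp_gammaFn hKLp))).integrable le_top
  have hF_zero : ∫ x, F x ∂Measure.pi m = 0 := by
    simpa only [Pi.sub_apply, Finset.sum_sub_distrib] using
      integral_gammaFn_sub_mul_sum_eq_zero hKLp hφ hψ h fun i => (hφ i).2.sub (hψ i).2
  have hF_pos : ∀ᵐ x ∂Measure.pi m, u x ≠ v x → 0 < F x := by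
    filter_upwards [hKpos] with x hx hne
    exact mul_exp_sub_mul_exp_mul_sub_pos hx hne
  have hF_nonneg : 0 ≤ᵐ[Measure.pi m] F := by
    filter_upwards [hF_pos] with x hx
    by_cases heq : u x = v x
    · simp [F, heq]
    · exact (hx heq).le
  filter_upwards [(integral_eq_zero_iff_of_nonneg_ae hF_nonneg hF_int).1 hF_zero, hF_pos]
    with x hx hx_pos
  by_contra hne
  exact (hx_pos hne).ne' hx

/-- If `T(φ) = T(ψ)` a.e. for two (not necessarily normalized)
tuples of essentially bounded measurable functions, then
`∑ φ_i(x_i) = ∑ ψ_i(x_i)` for `m`-a.e. `x`. -/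
theorem sum_potentials_unique
    {N : ℕ} (hN : 2 ≤ N) {X : Fin N → Type*} [∀ i, MeasurableSpace (X i)]
    (m : ∀ i, MeasureTheory.Measure (X i)) [∀ i, MeasureTheory.IsProbabilityMeasure (m i)]
    (K : (∀ i, X i) → ℝ) (a b : ℝ) (ha : 0 < a) (hab : a ≤ b)
    (hK : Measurable K) (hKb : ∀ᵐ x ∂MeasureTheory.Measure.pi m, a ≤ K x ∧ K x ≤ b)
    (φ ψ : ∀ i, X i → ℝ) (hφ : BddTuple m φ) (hψ : BddTuple m ψ)
    (h : ∀ i, schrT m K φ i =ᵐ[m i] schrT m K ψ i) :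
    ∀ᵐ x ∂MeasureTheory.Measure.pi m, ∑ i, φ i (x i) = ∑ i, ψ i (x i) :=
  sum_potentials_unique_general m K a b ha hK hKb φ ψ hφ hψ h
end

section
/- Smoothing property of the linearizing operator: for every tuple φ of essentially bounded measurable functions there is a constant C (depending on N, the bounds a, b on K and on max_i ‖φ_i‖_{L^∞}) such that for every h = (h_1,…,h_N) with h_i ∈ L²(X_i,m_i), each L_{φ,i}(h) is essentially bounded with ‖L_{φ,i}(h)‖_{L^∞(m_i)} ≤ C Σ_{j≠i} ‖h_j‖_{L²(m_j)}. -/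
open MeasureTheory Filter
open scoped ENNReal

/-! For almost every `x_i`, the density `y ↦ γ_φ(x_i, y_{-i})` is pinched between `a e^{-S}`
and `b e^S`, where `S = ∑_j R_j` for a.e. bounds `|φ_j| ≤ R_j`. So `L_{φ,i}(h)(x_i)`, a
`γ_φ`-weighted average of `∑_{j ≠ i} h_j(x_j)`, is at most `b e^S / (a e^{-S})` times the
unweighted average of `|∑_{j ≠ i} h_j(x_j)|`, which is bounded by
`∑_{j ≠ i} ‖h_j‖_{L¹} ≤ ∑_{j ≠ i} ‖h_j‖_{L²}` since every `m_j` is a probability measure. -/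

open Finset Function

section Pi

variable {ι : Type*} [Fintype ι] {X : ι → Type*} [∀ i, MeasurableSpace (X i)]
  (μ : ∀ i, Measure (X i)) [∀ i, IsProbabilityMeasure (μ i)]

theorem integral_comp_eval {j : ι} {g : X j → ℝ} (hg : AEStronglyMeasurable g (μ j)) :
    ∫ y, g (y j) ∂Measure.pi μ = ∫ x, g x ∂μ j := by
  rw [← (measurePreserving_eval μ j).map_eq] at hg ⊢
  exact (integral_map (measurable_pi_apply j).aemeasurable hg).symm

theorem integrable_sum_comp_eval (s : Finset ι) {h : ∀ j, X j → ℝ}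
    (hh : ∀ j, Integrable (h j) (μ j)) :
    Integrable (fun y : ∀ j, X j => ∑ j ∈ s, h j (y j)) (Measure.pi μ) :=
  integrable_finsetSum _ fun j _ =>
    (measurePreserving_eval μ j).integrable_comp_of_integrable (hh j)

theorem integral_abs_sum_comp_eval_le (s : Finset ι) {h : ∀ j, X j → ℝ}
    (hh : ∀ j, Integrable (h j) (μ j)) :
    ∫ y, |∑ j ∈ s, h j (y j)| ∂Measure.pi μ ≤ ∑ j ∈ s, ∫ x, |h j x| ∂μ j :=
  calc ∫ y, |∑ j ∈ s, h j (y j)| ∂Measure.pi μ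
      ≤ ∫ y, ∑ j ∈ s, |h j (y j)| ∂Measure.pi μ :=
        integral_mono (integrable_sum_comp_eval μ s hh).abs
          (integrable_sum_comp_eval μ s fun j => (hh j).abs) fun y => abs_sum_le_sum_abs _ _
    _ = ∑ j ∈ s, ∫ x, |h j x| ∂μ j := by
        rw [integral_finsetSum]
        · exact sum_congr rfl fun j _ => integral_comp_eval μ (hh j).abs.aestronglyMeasurable
        · exact fun j _ => (measurePreserving_eval μ j).integrable_comp_of_integrable (hh j).abs

variable [DecidableEq ι]

theorem measurePreserving_update_pi (i : ι) :
    MeasurePreserving (fun p : X i × (∀ j, X j) => update p.2 i p.1)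
      ((μ i).prod (Measure.pi μ)) (Measure.pi μ) := by
  have hmeas : Measurable fun p : X i × (∀ j, X j) => update p.2 i p.1 :=
    measurable_update'.comp measurable_swap
  refine ⟨hmeas, (Measure.pi_eq fun s hs => ?_).symm⟩
  have hpre : (fun p : X i × (∀ j, X j) => update p.2 i p.1) ⁻¹' Set.univ.pi s =
      s i ×ˢ Set.univ.pi (update s i Set.univ) := by
    ext ⟨z, y⟩
    simp only [Set.mem_preimage, Set.mem_univ_pi, Set.mem_prod]
    grind
  rw [Measure.map_apply hmeas (.univ_pi hs), hpre, Measure.prod_prod, Measure.pi_pi,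
    ← mul_prod_erase _ _ (mem_univ i), ← mul_prod_erase _ (fun j => μ j (s j)) (mem_univ i),
    update_self, measure_univ, one_mul]
  exact congrArg _ <| prod_congr rfl fun j hj => by rw [update_of_ne (ne_of_mem_erase hj)]

theorem ae_ae_update_of_ae_pi {P : (∀ j, X j) → Prop} (i : ι) (hP : ∀ᵐ x ∂Measure.pi μ, P x) :
    ∀ᵐ xi ∂μ i, ∀ᵐ y ∂Measure.pi μ, P (update y i xi) :=
  Measure.ae_ae_of_ae_prod <|
    (measurePreserving_update_pi μ i).quasiMeasurePreserving.tendsto_ae.eventually hP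

end Pi

theorem integral_abs_le_sqrt_integral_sq {α : Type*} [MeasurableSpace α] {μ : Measure α}
    [IsProbabilityMeasure μ] {f : α → ℝ} (hf : MemLp f 2 μ) :
    ∫ x, |f x| ∂μ ≤ √(∫ x, f x ^ 2 ∂μ) := by
  refine Real.le_sqrt_of_sq_le ?_
  have := ProbabilityTheory.variance_nonneg |f| μ
  rw [ProbabilityTheory.variance_eq_sub hf.abs] at this
  simpa [sq_abs] using this

theorem MeasureTheory.MemLp.exists_ae_abs_le {α : Type*} [MeasurableSpace α] {μ : Measure α}
    {f : α → ℝ} (hf : MemLp f ⊤ μ) : ∃ R, ∀ᵐ x ∂μ, |f x| ≤ R := by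
  have hfin : eLpNormEssSup f μ < ⊤ := by simpa only [eLpNorm_exponent_top] using hf.2
  obtain ⟨C, hC⟩ := eLpNormEssSup_lt_top_iff_isBoundedUnder.mp hfin
  exact ⟨C, (eventually_map.mp hC).mono fun x hx => by
    rw [← Real.norm_eq_abs, ← coe_nnnorm]; exact_mod_cast hx⟩

theorem abs_integral_mul_div_integral_le {α : Type*} [MeasurableSpace α] {μ : Measure α}
    [IsProbabilityMeasure μ] {g F : α → ℝ} {A B : ℝ} (hA : 0 < A)
    (hgm : AEStronglyMeasurable g μ) (hg : ∀ᵐ y ∂μ, g y ∈ Set.Icc A B) (hF : Integrable F μ) :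
    |(∫ y, g y * F y ∂μ) / ∫ y, g y ∂μ| ≤ B / A * ∫ y, |F y| ∂μ := by
  have habs : ∀ᵐ y ∂μ, |g y| = g y := hg.mono fun y hy => abs_of_pos (hA.trans_le hy.1)
  have hgint : Integrable g μ :=
    .of_bound hgm B <| (hg.and habs).mono fun y hy => by rw [Real.norm_eq_abs, hy.2]; exact hy.1.2
  have hden : A ≤ ∫ y, g y ∂μ := by
    simpa using integral_mono_ae (integrable_const A) hgint (hg.mono fun y hy => hy.1)
  have hnum : |∫ y, g y * F y ∂μ| ≤ B * ∫ y, |F y| ∂μ := by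
    rw [← integral_const_mul (μ := μ) B fun y => |F y|, ← Real.norm_eq_abs]
    refine norm_integral_le_of_norm_le (hF.abs.const_mul B) <| (hg.and habs).mono fun y hy => ?_
    rw [Real.norm_eq_abs, abs_mul, hy.2]
    exact mul_le_mul_of_nonneg_right hy.1.2 (abs_nonneg _)
  have hden_pos : 0 < ∫ y, g y ∂μ := hA.trans_le hden
  rw [abs_div, abs_of_pos hden_pos]
  calc |∫ y, g y * F y ∂μ| / ∫ y, g y ∂μ ≤ B * (∫ y, |F y| ∂μ) / ∫ y, g y ∂μ := by gcongr
    _ ≤ B * (∫ y, |F y| ∂μ) / A := by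
        have := (abs_nonneg _).trans hnum
        gcongr
    _ = B / A * ∫ y, |F y| ∂μ := by ring

theorem measurable_gammaFn {N : ℕ} {X : Fin N → Type*} [∀ i, MeasurableSpace (X i)]
    {K : (∀ i, X i) → ℝ} {φ : ∀ i, X i → ℝ} (hK : Measurable K) (hφ : ∀ j, Measurable (φ j)) :
    Measurable (gammaFn K φ) :=
  hK.mul <| Real.measurable_exp.comp <| Finset.measurable_sum _ fun j _ =>
    (hφ j).comp (measurable_pi_apply j)

theorem gammaFn_mem_Icc {N : ℕ} {X : Fin N → Type*} {K : (∀ i, X i) → ℝ} {φ : ∀ i, X i → ℝ}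
    {a b : ℝ} {R : Fin N → ℝ} {x : ∀ i, X i} (ha : 0 ≤ a) (hK : a ≤ K x ∧ K x ≤ b)
    (hφ : ∀ j, |φ j (x j)| ≤ R j) :
    gammaFn K φ x ∈ Set.Icc (a * Real.exp (-∑ j, R j)) (b * Real.exp (∑ j, R j)) := by
  obtain ⟨hlo, hhi⟩ := abs_le.mp <|
    (abs_sum_le_sum_abs _ _).trans (sum_le_sum fun j _ => hφ j : ∑ j, |φ j (x j)| ≤ ∑ j, R j)
  exact ⟨mul_le_mul hK.1 (Real.exp_le_exp.2 hlo) (Real.exp_pos _).le (ha.trans hK.1),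
    mul_le_mul hK.2 (Real.exp_le_exp.2 hhi) (Real.exp_pos _).le (ha.trans (hK.1.trans hK.2))⟩

theorem schrL_smoothing_general
    {N : ℕ} {X : Fin N → Type*} [∀ i, MeasurableSpace (X i)]
    (m : ∀ i, MeasureTheory.Measure (X i)) [∀ i, MeasureTheory.IsProbabilityMeasure (m i)]
    (K : (∀ i, X i) → ℝ) (a b : ℝ) (ha : 0 < a) (hab : a ≤ b)
    (hK : Measurable K) (hKb : ∀ᵐ x ∂MeasureTheory.Measure.pi m, a ≤ K x ∧ K x ≤ b)
    (φ : ∀ i, X i → ℝ) (hφ : BddTuple m φ) :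
    ∃ C : ℝ, ∀ h : ∀ i, X i → ℝ, (∀ i, Measurable (h i)) → (∀ i, MemLp (h i) 2 (m i)) →
      ∀ i, ∀ᵐ xi ∂m i,
        |schrL m K φ h i xi| ≤
          C * ∑ j ∈ Finset.univ.erase i, Real.sqrt (∫ x, h j x ^ 2 ∂m j) := by
  choose R hR using fun j => (hφ j).2.exists_ae_abs_le
  set S := ∑ j, R j
  have hγ : ∀ᵐ x ∂Measure.pi m,
      gammaFn K φ x ∈ Set.Icc (a * Real.exp (-S)) (b * Real.exp S) := by
    have hφR : ∀ᵐ x ∂Measure.pi m, ∀ j, |φ j (x j)| ≤ R j :=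
      ae_all_iff.2 fun j => Measure.tendsto_eval_ae_ae.eventually (hR j)
    filter_upwards [hKb, hφR] with x hKx hφx using gammaFn_mem_Icc ha.le hKx hφx
  have hC : 0 ≤ b * Real.exp S / (a * Real.exp (-S)) := by
    have hb : 0 ≤ b := ha.le.trans hab
    positivity
  refine ⟨b * Real.exp S / (a * Real.exp (-S)), fun h _ hh i => ?_⟩
  have hh1 : ∀ j, Integrable (h j) (m j) := fun j => (hh j).integrable one_le_two
  filter_upwards [ae_ae_update_of_ae_pi m i hγ] with xi hxi
  have hcoord : ∀ y : ∀ j, X j, ∑ j ∈ univ.erase i, h j (update y i xi j) =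
      ∑ j ∈ univ.erase i, h j (y j) :=
    fun y => sum_congr rfl fun j hj => by rw [update_of_ne (ne_of_mem_erase hj)]
  simp only [schrL, hcoord]
  have hγm : Measurable fun y => gammaFn K φ (update y i xi) :=
    (measurable_gammaFn hK fun j => (hφ j).1).comp measurable_update_left
  calc _ ≤ _ := abs_integral_mul_div_integral_le (by positivity) hγm.aestronglyMeasurable hxi
          (integrable_sum_comp_eval m _ hh1)
    _ ≤ _ := mul_le_mul_of_nonneg_left ((integral_abs_sum_comp_eval_le m _ hh1).trans
          (sum_le_sum fun j _ => integral_abs_le_sqrt_integral_sq (hh j))) hC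

/-- Smoothing property of the linearizing operator: `L_{φ,i}`
maps `L²` tuples into `L^∞` with `‖L_{φ,i}(h)‖_{L^∞} ≤ C ∑_{j ≠ i} ‖h_j‖_{L²}`. -/
theorem schrL_smoothing
    {N : ℕ} (hN : 2 ≤ N) {X : Fin N → Type*} [∀ i, MeasurableSpace (X i)]
    (m : ∀ i, MeasureTheory.Measure (X i)) [∀ i, MeasureTheory.IsProbabilityMeasure (m i)]
    (K : (∀ i, X i) → ℝ) (a b : ℝ) (ha : 0 < a) (hab : a ≤ b)
    (hK : Measurable K) (hKb : ∀ᵐ x ∂MeasureTheory.Measure.pi m, a ≤ K x ∧ K x ≤ b)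
    (φ : ∀ i, X i → ℝ) (hφ : BddTuple m φ) :
    ∃ C : ℝ, ∀ h : ∀ i, X i → ℝ, (∀ i, Measurable (h i)) → (∀ i, MemLp (h i) 2 (m i)) →
      ∀ i, ∀ᵐ xi ∂m i,
        |schrL m K φ h i xi| ≤
          C * ∑ j ∈ Finset.univ.erase i, Real.sqrt (∫ x, h j x ^ 2 ∂m j) :=
  schrL_smoothing_general m K a b ha hab hK hKb φ hφ
end
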